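/- arXiv:1908.11171 — 3 statements merged into one kernel-verified Lean document; each statement's English description precedes it below -/
import Mathlib

section
/- The pointwise generalized Picone inequality: for real vectors a, b in ℝ^N (representing ∇u(x) and ∇z(x)) together with positive real numbers u > 0, z ≥ 0, and exponents 1 < q ≤ p, one has (1/p)|a|^{p-2}⟨a, c⟩ ≤ (q/p)|b|^p + ((p-q)/p)|a|^p, where c = q(z/u)^{q-1} b - (q-1)(z/u)^q a. -/
open Real

lemma picone_key (p q t A B : ℝ) (hq : 1 < q) (hqp : q ≤ p) (ht : 0 ≤ t)
    (hA : 0 < A) (hB : 0 ≤ B) :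
    (1 / p) * A ^ (p - 2) * (q * t ^ (q - 1) * (A * B) - (q - 1) * t ^ q * A ^ (2 : ℕ)) ≤
      (q / p) * B ^ p + ((p - q) / p) * A ^ p := by
  have hp : 0 < p := by linarith
  have hq0 : 0 < q := by linarith
  have e1 : A ^ (p - 2) * (A : ℝ) ^ (2 : ℕ) = A ^ p := by
    rw [← Real.rpow_natCast A 2, ← Real.rpow_add hA]; norm_num
  have e2 : A ^ (p - 2) * A = A ^ (p - 1) := by
    nth_rewrite 2 [← Real.rpow_one A]
    rw [← Real.rpow_add hA]; ring_nf
  -- Step 1: Young's inequality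
  have y1 : (t * A) ^ (q - 1) * B ≤ (q - 1) / q * (t * A) ^ q + 1 / q * B ^ q := by
    have h := Real.geom_mean_le_arith_mean2_weighted (w₁ := (q - 1) / q) (w₂ := 1 / q)
      (p₁ := (t * A) ^ q) (p₂ := B ^ q)
      (div_nonneg (by linarith) hq0.le) (by positivity) (by positivity) (by positivity)
      (by field_simp; ring)
    have e3 : ((t * A) ^ q) ^ ((q - 1) / q) = (t * A) ^ (q - 1) := by
      rw [← Real.rpow_mul (by positivity)]
      congr 1; field_simp
    have e4 : (B ^ q) ^ (1 / q) = B := by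
      rw [← Real.rpow_mul hB]
      field_simp; simp
    rwa [e3, e4] at h
  have hmul : (t * A) ^ (q - 1) = t ^ (q - 1) * A ^ (q - 1) :=
    Real.mul_rpow ht hA.le
  have hmulq : (t * A) ^ q = t ^ q * A ^ q := Real.mul_rpow ht hA.le
  -- multiply y1 by q * A^(p-q)
  have hApq : (0:ℝ) ≤ A ^ (p - q) := by positivity
  have y1' : q * t ^ (q - 1) * A ^ (p - 1) * B ≤
      (q - 1) * t ^ q * A ^ p + B ^ q * A ^ (p - q) := by
    have h := mul_le_mul_of_nonneg_left (mul_le_mul_of_nonneg_right y1 hApq) hq0.le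
    have eA1 : A ^ (q - 1) * A ^ (p - q) = A ^ (p - 1) := by
      rw [← Real.rpow_add hA]; ring_nf
    have eA2 : A ^ q * A ^ (p - q) = A ^ p := by
      rw [← Real.rpow_add hA]; ring_nf
    calc q * t ^ (q - 1) * A ^ (p - 1) * B
        = q * ((t * A) ^ (q - 1) * B * A ^ (p - q)) := by
          rw [hmul, ← eA1]; ring
      _ ≤ q * (((q - 1) / q * (t * A) ^ q + 1 / q * B ^ q) * A ^ (p - q)) := h
      _ = (q - 1) * t ^ q * A ^ p + B ^ q * A ^ (p - q) := by
          rw [hmulq, ← eA2]; field_simp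
  -- Step 2: Young again
  have y2 : B ^ q * A ^ (p - q) ≤ q / p * B ^ p + (p - q) / p * A ^ p := by
    have h := Real.geom_mean_le_arith_mean2_weighted (w₁ := q / p) (w₂ := (p - q) / p)
      (p₁ := B ^ p) (p₂ := A ^ p)
      (div_nonneg hq0.le hp.le) (div_nonneg (by linarith) hp.le) (by positivity) (by positivity)
      (by field_simp; ring)
    have e5 : (B ^ p) ^ (q / p) = B ^ q := by
      rw [← Real.rpow_mul hB]; congr 1; field_simp
    have e6 : (A ^ p) ^ ((p - q) / p) = A ^ (p - q) := by
      rw [← Real.rpow_mul hA.le]; congr 1; field_simp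
    rwa [e5, e6] at h
  have hG : q * t ^ (q - 1) * A ^ (p - 1) * B - (q - 1) * t ^ q * A ^ p ≤
      q * B ^ p + (p - q) * A ^ p := by
    have hp1 : 1 ≤ p := by linarith
    have m1 : q / p * B ^ p ≤ q * B ^ p :=
      mul_le_mul_of_nonneg_right (div_le_self hq0.le hp1) (by positivity)
    have m2 : (p - q) / p * A ^ p ≤ (p - q) * A ^ p :=
      mul_le_mul_of_nonneg_right (div_le_self (by linarith) hp1) (by positivity)
    linarith
  have expand : (1 / p) * A ^ (p - 2) * (q * t ^ (q - 1) * (A * B) - (q - 1) * t ^ q * A ^ (2:ℕ))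
      = (1 / p) * (q * t ^ (q - 1) * A ^ (p - 1) * B - (q - 1) * t ^ q * A ^ p) := by
    rw [← e1, ← e2]; ring
  have rhs : (q / p) * B ^ p + ((p - q) / p) * A ^ p
      = (1 / p) * (q * B ^ p + (p - q) * A ^ p) := by ring
  rw [expand, rhs]
  exact mul_le_mul_of_nonneg_left hG (by positivity)

/-- Pointwise (algebraic) generalized Picone inequality. -/
theorem stmt1 {N : ℕ} (p q : ℝ) (hq : 1 < q) (hqp : q ≤ p)
    (a b : EuclideanSpace ℝ (Fin N)) (u z : ℝ) (hu : 0 < u) (hz : 0 ≤ z) :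
    (1 / p) * ‖a‖ ^ (p - 2) *
        (inner ℝ a ((q * (z / u) ^ (q - 1)) • b - ((q - 1) * (z / u) ^ q) • a) : ℝ) ≤
      (q / p) * ‖b‖ ^ p + ((p - q) / p) * ‖a‖ ^ p := by
  have hp : 0 < p := by linarith
  by_cases ha : a = 0
  · simp only [ha, inner_zero_left, mul_zero, norm_zero]
    have h1 : (0:ℝ) ≤ (q / p) * ‖b‖ ^ p :=
      mul_nonneg (div_nonneg (by linarith) hp.le) (by positivity)
    have h2 : (0:ℝ) ≤ ((p - q) / p) * (0:ℝ) ^ p :=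
      mul_nonneg (div_nonneg (by linarith) hp.le) (by positivity)
    linarith
  · have hA : 0 < ‖a‖ := norm_pos_iff.mpr ha
    set t := z / u with htdef
    have ht : 0 ≤ t := div_nonneg hz hu.le
    rw [inner_sub_right, real_inner_smul_right, real_inner_smul_right,
      real_inner_self_eq_norm_sq]
    have hab : (inner ℝ a b : ℝ) ≤ ‖a‖ * ‖b‖ := real_inner_le_norm a b
    have step : (1 / p) * ‖a‖ ^ (p - 2) *
        (q * t ^ (q - 1) * (inner ℝ a b : ℝ) - (q - 1) * t ^ q * ‖a‖ ^ 2) ≤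
        (1 / p) * ‖a‖ ^ (p - 2) *
        (q * t ^ (q - 1) * (‖a‖ * ‖b‖) - (q - 1) * t ^ q * ‖a‖ ^ 2) := by
      have hc : (0:ℝ) ≤ (1 / p) * ‖a‖ ^ (p - 2) := by positivity
      apply mul_le_mul_of_nonneg_left _ hc
      have : q * t ^ (q - 1) * (inner ℝ a b : ℝ) ≤ q * t ^ (q - 1) * (‖a‖ * ‖b‖) :=
        mul_le_mul_of_nonneg_left hab (by positivity)
      linarith
    calc (1 / p) * ‖a‖ ^ (p - 2) *
        (q * t ^ (q - 1) * (inner ℝ a b : ℝ) - (q - 1) * t ^ q * ‖a‖ ^ 2)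
        ≤ (1 / p) * ‖a‖ ^ (p - 2) *
          (q * t ^ (q - 1) * (‖a‖ * ‖b‖) - (q - 1) * t ^ q * ‖a‖ ^ 2) := step
      _ ≤ (q / p) * ‖b‖ ^ p + ((p - q) / p) * ‖a‖ ^ p :=
          picone_key p q t ‖a‖ ‖b‖ hq hqp ht hA (norm_nonneg b)
end

section
/- Let H be a real Hilbert space of real-valued L² functions on a measure space, and let J : H → (-∞,+∞] be convex, proper, lower semicontinuous and satisfy J(min(w,ŵ)) + J(max(w,ŵ)) ≤ J(w) + J(ŵ) for all w, ŵ. Then the subdifferential ∂J is T-monotone: for z ∈ ∂J(w) and ẑ ∈ ∂J(ŵ), ∫ (z − ẑ)(w − ŵ)₊ dμ ≥ 0. -/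
open MeasureTheory

variable {α : Type*} [MeasurableSpace α]

/-- The subdifferential of an extended-real valued functional on `L²`. -/
def subdiff {ν : Measure α} (J : Lp ℝ 2 ν → EReal) (w : Lp ℝ 2 ν) : Set (Lp ℝ 2 ν) :=
  {z | ∀ ξ, J w + (((inner ℝ z (ξ - w) : ℝ)) : EReal) ≤ J ξ}

/-- If `J` is convex, proper, l.s.c. on `L²` and satisfies the min-max submodularity
inequality, then `∂J` is T-monotone: `⟨z − z', (w − w')₊⟩ ≥ 0`. -/
theorem stmt3 (ν : Measure α) (J : Lp ℝ 2 ν → EReal)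
    (hconv : ∀ w w' : Lp ℝ 2 ν, ∀ t : ℝ, 0 ≤ t → t ≤ 1 →
      J (t • w + (1 - t) • w') ≤ (t : EReal) * J w + ((1 - t : ℝ) : EReal) * J w')
    (hproper : ∃ w, J w ≠ ⊤) (hnotbot : ∀ w, J w ≠ ⊥)
    (hlsc : LowerSemicontinuous J)
    (hsubmod : ∀ w w' : Lp ℝ 2 ν, J (w ⊓ w') + J (w ⊔ w') ≤ J w + J w')
    (w w' z z' : Lp ℝ 2 ν) (hz : z ∈ subdiff J w) (hz' : z' ∈ subdiff J w') :
    0 ≤ (inner ℝ (z - z') ((w - w') ⊔ 0) : ℝ) := by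
  obtain ⟨w₀, hw₀⟩ := hproper
  set p : Lp ℝ 2 ν := (w - w') ⊔ 0 with hp
  have hsup : w ⊔ w' - w' = p := by rw [sup_sub]; simp [hp]
  have hinf : w ⊓ w' - w = -p := by rw [inf_sub]; simp [hp, neg_sup, sup_comm, inf_comm]
  -- J w, J w' are not ⊤
  have htop : ∀ (u : Lp ℝ 2 ν), (∃ y, y ∈ subdiff J u) → J u ≠ ⊤ := by
    rintro u ⟨y, hy⟩ h
    have := hy w₀
    rw [h, EReal.top_add_of_ne_bot (by exact_mod_cast EReal.coe_ne_bot _)] at this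
    exact hw₀ (top_le_iff.mp this)
  have hwtop : J w ≠ ⊤ := htop w ⟨z, hz⟩
  have hw'top : J w' ≠ ⊤ := htop w' ⟨z', hz'⟩
  set A : ℝ := (J w).toReal
  set B : ℝ := (J w').toReal
  have hA : J w = (A : EReal) := (EReal.coe_toReal hwtop (hnotbot w)).symm
  have hB : J w' = (B : EReal) := (EReal.coe_toReal hw'top (hnotbot w')).symm
  have hs := hsubmod w w'
  rw [hA, hB, ← EReal.coe_add] at hs
  -- J (w ⊓ w') and J (w ⊔ w') are not ⊤
  have hCtop : J (w ⊓ w') ≠ ⊤ := by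
    intro h
    rw [h, EReal.top_add_of_ne_bot (hnotbot _)] at hs
    exact (EReal.coe_ne_top _) (top_le_iff.mp hs)
  have hDtop : J (w ⊔ w') ≠ ⊤ := by
    intro h
    rw [h, EReal.add_top_of_ne_bot (hnotbot _)] at hs
    exact (EReal.coe_ne_top _) (top_le_iff.mp hs)
  set C : ℝ := (J (w ⊓ w')).toReal
  set D : ℝ := (J (w ⊔ w')).toReal
  have hC : J (w ⊓ w') = (C : EReal) := (EReal.coe_toReal hCtop (hnotbot _)).symm
  have hD : J (w ⊔ w') = (D : EReal) := (EReal.coe_toReal hDtop (hnotbot _)).symm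
  rw [hC, hD, ← EReal.coe_add] at hs
  have hs' : C + D ≤ A + B := by exact_mod_cast hs
  have h1 := hz (w ⊓ w')
  rw [hA, hC, hinf, inner_neg_right, ← EReal.coe_add] at h1
  have h1' : A + -(inner ℝ z p : ℝ) ≤ C := by exact_mod_cast h1
  have h2 := hz' (w ⊔ w')
  rw [hB, hD, hsup, ← EReal.coe_add] at h2
  have h2' : B + (inner ℝ z' p : ℝ) ≤ D := by exact_mod_cast h2
  have key : (inner ℝ z' p : ℝ) - inner ℝ z p ≤ 0 := by linarith
  rw [inner_sub_left]
  linarith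
end

section
/- Let J : L²(Ω) → (-∞,+∞] be convex, proper, l.s.c. whose subdifferential is T-monotone. If w + μ∂J(w) ∋ h and ŵ + μ∂J(ŵ) ∋ ĥ for some μ > 0 and h, ĥ ∈ L²(Ω), then ‖(w − ŵ)₊‖_{L²} ≤ ‖(h − ĥ)₊‖_{L²}. -/
open MeasureTheory

variable {α : Type*} [MeasurableSpace α]

theorem aux_inner_sup (ν : Measure α) (u : Lp ℝ 2 ν) :
    (inner ℝ u (u ⊔ 0) : ℝ) = inner ℝ (u ⊔ 0) (u ⊔ 0) := by
  rw [L2.inner_def, L2.inner_def]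
  refine integral_congr_ae ?_
  filter_upwards [Lp.coeFn_sup u 0, Lp.coeFn_zero ℝ 2 ν] with a ha h0
  rw [Pi.sup_apply] at ha
  rw [h0, Pi.zero_apply] at ha
  simp only [RCLike.inner_apply, conj_trivial, ha]
  rcases le_total (u a) 0 with hle | hle
  · simp [sup_eq_right.mpr hle]
  · simp [sup_eq_left.mpr hle]

theorem aux_inner_le (ν : Measure α) (f g : Lp ℝ 2 ν) :
    (inner ℝ f (g ⊔ 0) : ℝ) ≤ inner ℝ (f ⊔ 0) (g ⊔ 0) := by
  rw [L2.inner_def, L2.inner_def]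
  refine integral_mono_ae (L2.integrable_inner f (g ⊔ 0))
    (L2.integrable_inner (f ⊔ 0) (g ⊔ 0)) ?_
  filter_upwards [Lp.coeFn_sup f 0, Lp.coeFn_sup g 0, Lp.coeFn_zero ℝ 2 ν] with a hf hg h0
  rw [Pi.sup_apply, h0, Pi.zero_apply] at hf hg
  simp only [RCLike.inner_apply', conj_trivial, hf, hg]
  exact mul_le_mul_of_nonneg_right (le_sup_left) (le_sup_right)

/-- If `J` is convex, proper, l.s.c. with T-monotone subdifferential and
`w + μ ∂J(w) ∋ h`, `w' + μ ∂J(w') ∋ h'`, then `‖(w − w')₊‖₂ ≤ ‖(h − h')₊‖₂`. -/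
theorem stmt4 (ν : Measure α) (J : Lp ℝ 2 ν → EReal)
    (hconv : ∀ w w' : Lp ℝ 2 ν, ∀ t : ℝ, 0 ≤ t → t ≤ 1 →
      J (t • w + (1 - t) • w') ≤ (t : EReal) * J w + ((1 - t : ℝ) : EReal) * J w')
    (hproper : ∃ w, J w ≠ ⊤) (hnotbot : ∀ w, J w ≠ ⊥)
    (hlsc : LowerSemicontinuous J)
    (hT : ∀ w w' z z' : Lp ℝ 2 ν, z ∈ subdiff J w → z' ∈ subdiff J w' →
      0 ≤ (inner ℝ (z - z') ((w - w') ⊔ 0) : ℝ))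
    (μ : ℝ) (hμ : 0 < μ)
    (w w' h h' z z' : Lp ℝ 2 ν) (hz : z ∈ subdiff J w) (hz' : z' ∈ subdiff J w')
    (he : w + μ • z = h) (he' : w' + μ • z' = h') :
    ‖(w - w') ⊔ 0‖ ≤ ‖(h - h') ⊔ 0‖ := by
  set p := (w - w') ⊔ 0 with hp
  set q := (h - h') ⊔ 0 with hq
  have hd : h - h' = (w - w') + μ • (z - z') := by
    rw [← he, ← he']; module
  have h1 : (inner ℝ p p : ℝ) = inner ℝ (w - w') p := (aux_inner_sup ν (w - w')).symm
  have h2 : (inner ℝ (w - w') p : ℝ) ≤ inner ℝ (h - h') p := by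
    rw [hd, inner_add_left, real_inner_smul_left]
    have := hT w w' z z' hz hz'
    nlinarith
  have h3 : (inner ℝ (h - h') p : ℝ) ≤ inner ℝ q p := aux_inner_le ν (h - h') (w - w')
  have h4 : (inner ℝ q p : ℝ) ≤ ‖q‖ * ‖p‖ := real_inner_le_norm q p
  have h5 : ‖p‖ ^ 2 ≤ ‖q‖ * ‖p‖ := by
    rw [← real_inner_self_eq_norm_sq]
    linarith
  nlinarith [norm_nonneg p, norm_nonneg q]
end
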